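/- Fix N∈ℕ and x₁,x₂,y₁,y₂∈ℤ such that Ω(N,(x₁,x₂),(y₁,y₂)) is nonempty. Then for any functions h₁,h₂:{0,…,N}→ℤ, P^{N,(x₁,x₂),(y₁,y₂)}( L₁(j)≥h₁(j) for all j and L₂(j)≤h₂(j) for all j ) ≥ P^{N,x₁,y₁}( L(j)≥h₁(j) for all j ) · P^{N,x₂,y₂}( L(j)≤h₂(j) for all j ). -/

import Mathlib

/-- A Bernoulli path on `{0,…,N}`: increments in `{0,1}`. -/
def IsBPath (N : ℕ) (L : Fin (N+1) → ℤ) : Prop :=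
  ∀ j : Fin N, L j.succ = L j.castSucc ∨ L j.succ = L j.castSucc + 1

/-- `Ω(N,x,y)`: Bernoulli paths from `x` to `y`. -/
def pathSet (N : ℕ) (x y : ℤ) : Set (Fin (N+1) → ℤ) :=
  {L | IsBPath N L ∧ L 0 = x ∧ L (Fin.last N) = y}

/-- `Ω(N,(x₁,x₂),(y₁,y₂))`: pairs of ordered (non-intersecting) Bernoulli paths. -/
def pairSet (N : ℕ) (x₁ x₂ y₁ y₂ : ℤ) : Set ((Fin (N+1) → ℤ) × (Fin (N+1) → ℤ)) :=
  {p | IsBPath N p.1 ∧ IsBPath N p.2 ∧ (∀ j, p.2 j ≤ p.1 j) ∧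
    p.1 0 = x₁ ∧ p.2 0 = x₂ ∧ p.1 (Fin.last N) = y₁ ∧ p.2 (Fin.last N) = y₂}

/-- Probability of the event `A` under the uniform measure on the finite set `Ω`. -/
noncomputable def unifProb {X : Type*} (Ω A : Set X) : ℝ :=
  ((Ω ∩ A).ncard : ℝ) / (Ω.ncard : ℝ)

/-!
Order pairs of paths by `(L₁, L₂) ≤ (M₁, M₂)` iff `L₁ ≤ M₁` and `M₂ ≤ L₂` pointwise, a distributive
lattice. The meet of an ordered pair `(L₁, L₂) ∈ Ω` with a pair `(M₁, M₂)` of free paths satisfying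
`h₁ ≤ M₁`, `M₂ ≤ h₂` is again a pair of free paths, and their join is an ordered pair lying in the
event. Daykin's inequality `#S * #T ≤ #(S ⊼ T) * #(S ⊻ T)` thus gives
`#Ω * #(Ω₁ ∩ A₁) * #(Ω₂ ∩ A₂) ≤ #Ω₁ * #Ω₂ * #(Ω ∩ A)`, which is the claim.
-/

open Finset FinsetFamily in
theorem Set.ncard_mul_ncard_le_of_inf_sup_mem {α : Type*} [DistribLattice α]
    {s t u v : Set α} (hu : u.Finite) (hv : v.Finite)
    (h : ∀ a ∈ s, ∀ b ∈ t, a ⊓ b ∈ u ∧ a ⊔ b ∈ v) :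
    s.ncard * t.ncard ≤ u.ncard * v.ncard := by
  classical
  by_cases hst : s.Finite ∧ t.Finite
  · obtain ⟨hs, ht⟩ := hst
    have hinfs : hs.toFinset ⊼ ht.toFinset ⊆ hu.toFinset :=
      Finset.infs_subset_iff.2 fun a ha b hb ↦ by
        simpa using (h a (by simpa using ha) b (by simpa using hb)).1
    have hsups : hs.toFinset ⊻ ht.toFinset ⊆ hv.toFinset :=
      Finset.sups_subset_iff.2 fun a ha b hb ↦ by
        simpa using (h a (by simpa using ha) b (by simpa using hb)).2
    rw [ncard_eq_toFinset_card _ hs, ncard_eq_toFinset_card _ ht, ncard_eq_toFinset_card _ hu,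
      ncard_eq_toFinset_card _ hv]
    exact (le_card_infs_mul_card_sups _ _).trans
      (Nat.mul_le_mul (Finset.card_le_card hinfs) (Finset.card_le_card hsups))
  · rcases not_and_or.1 hst with hs | ht
    · simp [Set.Infinite.ncard hs]
    · simp [Set.Infinite.ncard ht]

theorem Set.ncard_mul_ncard_le_of_inf_sup_mem_prod_dual {α β : Type*} [DistribLattice α]
    [DistribLattice β] {s t u v : Set (α × β)} (hu : u.Finite) (hv : v.Finite)
    (h : ∀ a ∈ s, ∀ b ∈ t, (a.1 ⊓ b.1, a.2 ⊔ b.2) ∈ u ∧ (a.1 ⊔ b.1, a.2 ⊓ b.2) ∈ v) :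
    s.ncard * t.ncard ≤ u.ncard * v.ncard := by
  let e : α × β ≃ α × βᵒᵈ := (Equiv.refl α).prodCongr OrderDual.toDual
  simp only [← Set.ncard_image_of_injective _ e.injective]
  refine Set.ncard_mul_ncard_le_of_inf_sup_mem (hu.image e) (hv.image e) ?_
  rintro _ ⟨a, ha, rfl⟩ _ ⟨b, hb, rfl⟩
  exact ⟨⟨_, (h a ha b hb).1, rfl⟩, ⟨_, (h a ha b hb).2, rfl⟩⟩

section BernoulliPaths

variable {N : ℕ}

theorem IsBPath.monotone {L : Fin (N+1) → ℤ} (hL : IsBPath N L) : Monotone L :=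
  Fin.monotone_iff_le_succ.2 fun j ↦ by rcases hL j with h | h <;> omega

theorem IsBPath.sup {L M : Fin (N+1) → ℤ} (hL : IsBPath N L) (hM : IsBPath N M) :
    IsBPath N (L ⊔ M) := fun j ↦ by
  have := hL j; have := hM j
  simp only [Pi.sup_apply]
  omega

theorem IsBPath.inf {L M : Fin (N+1) → ℤ} (hL : IsBPath N L) (hM : IsBPath N M) :
    IsBPath N (L ⊓ M) := fun j ↦ by
  have := hL j; have := hM j
  simp only [Pi.inf_apply]
  omega

theorem sup_mem_pathSet {x y : ℤ} {L M : Fin (N+1) → ℤ} (hL : L ∈ pathSet N x y)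
    (hM : M ∈ pathSet N x y) : L ⊔ M ∈ pathSet N x y :=
  ⟨hL.1.sup hM.1, by simp [hL.2.1, hM.2.1], by simp [hL.2.2, hM.2.2]⟩

theorem inf_mem_pathSet {x y : ℤ} {L M : Fin (N+1) → ℤ} (hL : L ∈ pathSet N x y)
    (hM : M ∈ pathSet N x y) : L ⊓ M ∈ pathSet N x y :=
  ⟨hL.1.inf hM.1, by simp [hL.2.1, hM.2.1], by simp [hL.2.2, hM.2.2]⟩

theorem pathSet_finite (x y : ℤ) : (pathSet N x y).Finite := by
  refine (Set.Finite.pi fun _ ↦ Set.finite_Icc x y).subset ?_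
  rintro L ⟨hL, h0, hN⟩ j -
  exact ⟨h0 ▸ hL.monotone (Fin.zero_le j), hN ▸ hL.monotone (Fin.le_last j)⟩

theorem mem_pairSet_iff {x₁ x₂ y₁ y₂ : ℤ} {p : (Fin (N+1) → ℤ) × (Fin (N+1) → ℤ)} :
    p ∈ pairSet N x₁ x₂ y₁ y₂ ↔ p.1 ∈ pathSet N x₁ y₁ ∧ p.2 ∈ pathSet N x₂ y₂ ∧ p.2 ≤ p.1 := by
  simp only [pairSet, pathSet, Set.mem_ofPred_eq, Pi.le_def]
  tauto

theorem inf_sup_mem_of_mem_pairSet {x₁ x₂ y₁ y₂ : ℤ} {p : (Fin (N+1) → ℤ) × (Fin (N+1) → ℤ)}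
    {M₁ M₂ : Fin (N+1) → ℤ} (hp : p ∈ pairSet N x₁ x₂ y₁ y₂) (hM₁ : M₁ ∈ pathSet N x₁ y₁)
    (hM₂ : M₂ ∈ pathSet N x₂ y₂) :
    (p.1 ⊓ M₁, p.2 ⊔ M₂) ∈ pathSet N x₁ y₁ ×ˢ pathSet N x₂ y₂ ∧
      (p.1 ⊔ M₁, p.2 ⊓ M₂) ∈ pairSet N x₁ x₂ y₁ y₂ := by
  obtain ⟨hp₁, hp₂, hle⟩ := mem_pairSet_iff.1 hp
  exact ⟨⟨inf_mem_pathSet hp₁ hM₁, sup_mem_pathSet hp₂ hM₂⟩,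
    mem_pairSet_iff.2 ⟨sup_mem_pathSet hp₁ hM₁, inf_mem_pathSet hp₂ hM₂,
      inf_le_left.trans (hle.trans le_sup_left)⟩⟩

end BernoulliPaths

/-- Lemma 3.4: correlation inequality for non-intersecting Bernoulli random walk bridges. -/
theorem stmt13 (N : ℕ) (x₁ x₂ y₁ y₂ : ℤ)
    (hne : (pairSet N x₁ x₂ y₁ y₂).Nonempty)
    (h₁ h₂ : Fin (N+1) → ℤ) :
    unifProb (pairSet N x₁ x₂ y₁ y₂)
        {p | (∀ j, h₁ j ≤ p.1 j) ∧ (∀ j, p.2 j ≤ h₂ j)} ≥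
      unifProb (pathSet N x₁ y₁) {L | ∀ j, h₁ j ≤ L j} *
        unifProb (pathSet N x₂ y₂) {L | ∀ j, L j ≤ h₂ j} := by
  set Ω := pairSet N x₁ x₂ y₁ y₂
  set A : Set ((Fin (N+1) → ℤ) × (Fin (N+1) → ℤ)) :=
    {p | (∀ j, h₁ j ≤ p.1 j) ∧ (∀ j, p.2 j ≤ h₂ j)}
  set Ω₁ := pathSet N x₁ y₁
  set Ω₂ := pathSet N x₂ y₂
  set A₁ : Set (Fin (N+1) → ℤ) := {L | ∀ j, h₁ j ≤ L j}
  set A₂ : Set (Fin (N+1) → ℤ) := {L | ∀ j, L j ≤ h₂ j}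
  have hΩ_sub : Ω ⊆ Ω₁ ×ˢ Ω₂ := fun p hp ↦
    ⟨(mem_pairSet_iff.1 hp).1, (mem_pairSet_iff.1 hp).2.1⟩
  have hfin : (Ω₁ ×ˢ Ω₂).Finite := (pathSet_finite x₁ y₁).prod (pathSet_finite x₂ y₂)
  have hdaykin :
      Ω.ncard * ((Ω₁ ∩ A₁) ×ˢ (Ω₂ ∩ A₂)).ncard ≤ (Ω₁ ×ˢ Ω₂).ncard * (Ω ∩ A).ncard := by
    refine Set.ncard_mul_ncard_le_of_inf_sup_mem_prod_dual hfin
      ((hfin.subset hΩ_sub).inter_of_left A) ?_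
    rintro p hp M ⟨⟨hM₁, hA₁⟩, hM₂, hA₂⟩
    obtain ⟨hinf, hsup⟩ := inf_sup_mem_of_mem_pairSet hp hM₁ hM₂
    exact ⟨hinf, hsup, fun j ↦ (hA₁ j).trans le_sup_right, fun j ↦ inf_le_right.trans (hA₂ j)⟩
  rw [Set.ncard_prod, Set.ncard_prod] at hdaykin
  obtain ⟨p, hp⟩ := hne
  have hpos : (0 : ℝ) < Ω.ncard := by
    exact_mod_cast (Set.ncard_pos (hfin.subset hΩ_sub)).2 ⟨p, hp⟩
  have hpos₁ : (0 : ℝ) < Ω₁.ncard := by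
    exact_mod_cast (Set.ncard_pos (pathSet_finite x₁ y₁)).2 ⟨p.1, (hΩ_sub hp).1⟩
  have hpos₂ : (0 : ℝ) < Ω₂.ncard := by
    exact_mod_cast (Set.ncard_pos (pathSet_finite x₂ y₂)).2 ⟨p.2, (hΩ_sub hp).2⟩
  rw [ge_iff_le, unifProb, unifProb, unifProb, div_mul_div_comm,
    div_le_div_iff₀ (mul_pos hpos₁ hpos₂) hpos]
  norm_cast
  linarith
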